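/- arXiv:1202.2566 — 2 statements merged into one kernel-verified Lean document; each statement's English description precedes it below -/
import Mathlib

section
/- Let r ≥ 1 and m ≥ 2 be integers, let G = (ZMod m)^r (the homocyclic group of exponent m and rank r), and let S = {e_1, ..., e_r} be the set of standard basis vectors. Order G lexicographically: identify each element of G with its coordinate tuple (x_1, ..., x_r) with each x_i ∈ {0, 1, ..., m−1}, ordered lexicographically, and for 0 ≤ n ≤ m^r let I_n denote the set of the n lexicographically smallest elements of G. Then ∂_S(I_n) = m^r · ω_m(n/m^r). -/
/-!
Order `(ZMod m)^r` by `lexRank`, so that coordinate `i` is the base-`m` digit of weight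
`w = m^(r-1-i)`. Adding `e_i` to an element of rank `x` raises the rank by `w`, unless that digit
is `m - 1`, in which case it wraps around and the rank drops. Hence the edges in direction `e_i`
leaving `I_n` start at the ranks `x ∈ [n - w, n)` whose digit of weight `w` is not `m - 1`; this is
a condition on `x mod wm` and a window of length `w` contains `min(w, t, wm - t)` such `x`, where
`t = n mod wm`. That is `wm ‖n / wm‖_{1/m}`, the term `k = r - 1 - i` of `m^r ω_m(n / m^r)`; the
terms with `k ≥ r` vanish because `m^k n / m^r` is an integer.
-/

/-- Distance from `x` to the nearest integer: `‖x‖`. -/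
noncomputable def nearestIntDist (x : ℝ) : ℝ := |x - (round x : ℝ)|

/-- The generalized Takagi function
`ω_m(x) = ∑_{k=0}^∞ m^{-k} ‖m^k x‖_{1/m}`, where `‖·‖_α = min{‖·‖, α}`. -/
noncomputable def omegaT (m : ℕ) (x : ℝ) : ℝ :=
  ∑' k : ℕ, ((m : ℝ) ^ k)⁻¹ * min (nearestIntDist ((m : ℝ) ^ k * x)) (1 / m)

/-- The directed edge boundary `∂_S(A) = |{(a,s) ∈ A × S : a + s ∉ A}|`. -/
def edgeBoundary {G : Type*} [AddCommGroup G] [Fintype G] [DecidableEq G]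
    (S A : Finset G) : ℕ :=
  ((A ×ˢ S).filter fun p => p.1 + p.2 ∉ A).card

/-- The rank of `g : (ZMod m)^r` in the lexicographic order on coordinate
tuples `(x_1, …, x_r)`, `x_i ∈ {0, …, m-1}` (coordinate `1` most significant):
this is just the value of the base-`m` number with digits `x_1 x_2 ⋯ x_r`. -/
def lexRank (m r : ℕ) (g : Fin r → ZMod m) : ℕ :=
  ∑ i : Fin r, (g i).val * m ^ (r - 1 - (i : ℕ))

/-- The set of the `n` lexicographically smallest elements of `(ZMod m)^r`. -/
def lexSegment (m r : ℕ) [NeZero m] (n : ℕ) : Finset (Fin r → ZMod m) :=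
  Finset.univ.filter fun g => lexRank m r g < n

open Finset

lemma Pi.single_left_injective {ι β : Type*} [DecidableEq ι] [Zero β] {b : β} (hb : b ≠ 0) :
    Function.Injective fun i : ι => Pi.single i b := fun i j h => by
  by_contra hij
  simpa [Pi.single_eq_of_ne hij, hb] using congrFun h i

lemma edgeBoundary_eq_sum {G : Type*} [AddCommGroup G] [Fintype G] [DecidableEq G]
    (S A : Finset G) : edgeBoundary S A = ∑ s ∈ S, #{a ∈ A | a + s ∉ A} := by
  rw [edgeBoundary, card_filter, sum_product, sum_comm]
  simp_rw [card_filter]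

section LexRank

variable {m r : ℕ} [NeZero m]

/-- `finFunctionFinEquiv` makes coordinate `0` the least significant digit, hence the reversal. -/
def lexRankEquiv : (Fin r → ZMod m) ≃ Fin (m ^ r) :=
  (Fin.revPerm.arrowCongr (ZMod.finEquiv m).symm.toEquiv).trans finFunctionFinEquiv

lemma ZMod.finEquiv_symm_apply_val (x : ZMod m) :
    (((ZMod.finEquiv m).symm x : Fin m) : ℕ) = x.val := by
  cases m with
  | zero => exact absurd rfl (NeZero.ne 0)
  | succ m => rfl

lemma lexRankEquiv_apply (g : Fin r → ZMod m) : (lexRankEquiv g : ℕ) = lexRank m r g := by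
  rw [lexRankEquiv, Equiv.trans_apply, finFunctionFinEquiv_apply, lexRank]
  refine Fintype.sum_bijective Fin.rev Fin.rev_bijective _ _ fun i => ?_
  simp only [Equiv.arrowCongr_apply, Function.comp_apply, Fin.revPerm_symm, Fin.revPerm_apply,
    RingEquiv.toEquiv_eq_coe, RingEquiv.coe_toEquiv, ZMod.finEquiv_symm_apply_val, Fin.val_rev]
  congr 2
  omega

lemma lexRank_div_pow_mod (g : Fin r → ZMod m) (i : Fin r) :
    lexRank m r g / m ^ (r - 1 - (i : ℕ)) % m = (g i).val := by
  have h := finFunctionFinEquiv_symm_apply_val (lexRankEquiv g) i.rev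
  rw [lexRankEquiv_apply, Fin.val_rev] at h
  simp only [lexRankEquiv, Equiv.trans_apply, Equiv.symm_apply_apply, Equiv.arrowCongr_apply,
    Function.comp_apply, Fin.revPerm_symm, Fin.revPerm_apply, Fin.rev_rev,
    RingEquiv.toEquiv_eq_coe, RingEquiv.coe_toEquiv, ZMod.finEquiv_symm_apply_val] at h
  rw [h, Nat.sub_sub, add_comm 1]

lemma card_filter_lexRank (P : ℕ → Prop) [DecidablePred P] :
    #{g : Fin r → ZMod m | P (lexRank m r g)} = #{x ∈ range (m ^ r) | P x} := by
  refine card_bij (fun g _ => lexRank m r g) (fun g hg => ?_) (fun g _ g' _ h => ?_) fun x hx => ?_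
  · rw [mem_filter] at hg ⊢
    exact ⟨mem_range.2 (lexRankEquiv_apply g ▸ (lexRankEquiv g).isLt), hg.2⟩
  · rw [← lexRankEquiv_apply, ← lexRankEquiv_apply] at h
    exact lexRankEquiv.injective (Fin.ext h)
  · rw [mem_filter, mem_range] at hx
    refine ⟨lexRankEquiv.symm ⟨x, hx.1⟩, ?_, ?_⟩ <;>
      simp only [mem_filter, mem_univ, true_and, ← lexRankEquiv_apply, Equiv.apply_symm_apply, hx.2]

lemma lexRank_add_single (g : Fin r → ZMod m) (i : Fin r) :
    lexRank m r (g + Pi.single i 1) + (g i).val * m ^ (r - 1 - (i : ℕ))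
      = lexRank m r g + ((g i).val + 1) % m * m ^ (r - 1 - (i : ℕ)) := by
  have hval : (g i + 1).val = ((g i).val + 1) % m := by
    rw [ZMod.val_add, ZMod.val_one_eq_one_mod, Nat.add_mod_mod]
  have hrest : ∀ j ∈ univ.erase i,
      ((g + Pi.single i 1 : Fin r → ZMod m) j).val * m ^ (r - 1 - (j : ℕ))
        = (g j).val * m ^ (r - 1 - (j : ℕ)) := fun j hj => by
    rw [Pi.add_apply, Pi.single_eq_of_ne (ne_of_mem_erase hj), add_zero]
  rw [lexRank, lexRank, ← add_sum_erase _ _ (mem_univ i), ← add_sum_erase _ _ (mem_univ i),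
    sum_congr rfl hrest, Pi.add_apply, Pi.single_eq_same, hval]
  ring

lemma mem_lexSegment {n : ℕ} {g : Fin r → ZMod m} :
    g ∈ lexSegment m r n ↔ lexRank m r g < n := by
  simp [lexSegment]

lemma le_lexRank_add_single_iff {n : ℕ} {g : Fin r → ZMod m} (hg : lexRank m r g < n)
    (i : Fin r) : n ≤ lexRank m r (g + Pi.single i 1) ↔
      n ≤ lexRank m r g + m ^ (r - 1 - (i : ℕ)) ∧ (g i).val ≠ m - 1 := by
  have hstep := lexRank_add_single g i
  have hlt := (g i).val_lt
  by_cases hc : (g i).val = m - 1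
  · rw [hc, Nat.sub_add_cancel NeZero.one_le, Nat.mod_self, zero_mul] at hstep
    simp only [hc, ne_eq, not_true_eq_false, and_false, iff_false]
    omega
  · rw [Nat.mod_eq_of_lt (by omega), add_mul, one_mul] at hstep
    simp only [hc, ne_eq, not_false_eq_true, and_true]
    omega

lemma card_filter_add_single_notMem_lexSegment_eq_card_range (n : ℕ) (i : Fin r) :
    #{g ∈ lexSegment m r n | g + Pi.single i 1 ∉ lexSegment m r n}
      = #{x ∈ range (m ^ r) | x < n ∧ n ≤ x + m ^ (r - 1 - (i : ℕ)) ∧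
          x / m ^ (r - 1 - (i : ℕ)) % m ≠ m - 1} := by
  rw [← card_filter_lexRank]
  congr 1
  ext g
  simp only [mem_filter, mem_univ, true_and, mem_lexSegment, not_lt, lexRank_div_pow_mod]
  exact and_congr_right fun hg => le_lexRank_add_single_iff hg i

end LexRank

/-- `M * ‖n / M‖_{w / M}`, which is a natural number. -/
def scaledTruncDist (M w n : ℕ) : ℕ := min w (min (n % M) (M - n % M))

section Count

open Nat

lemma card_filter_Ico_eq_count_sub (p : ℕ → Prop) [DecidablePred p] {a b : ℕ} (hab : a ≤ b) :
    #{x ∈ Ico a b | p x} = count p b - count p a := by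
  rw [count_eq_card_filter_range, count_eq_card_filter_range, range_eq_Ico, range_eq_Ico,
    ← Ico_union_Ico_eq_Ico (Nat.zero_le a) hab, filter_union,
    card_union_of_disjoint (disjoint_filter_filter (Ico_disjoint_Ico_consecutive _ _ _))]
  omega

variable {M c : ℕ}

lemma count_mod_lt_of_le {t : ℕ} (ht : t ≤ M) : count (· % M < c) t = min t c := by
  rw [count_eq_card_filter_range, ← card_range (min t c)]
  congr 1
  ext x
  simp only [mem_filter, mem_range]
  constructor
  · rintro ⟨hxt, hxc⟩
    rw [Nat.mod_eq_of_lt (by omega)] at hxc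
    omega
  · intro hx
    rw [Nat.mod_eq_of_lt (by omega)]
    omega

lemma count_mod_lt (hc : c ≤ M) (k : ℕ) {t : ℕ} (ht : t ≤ M) :
    count (· % M < c) (M * k + t) = c * k + min t c := by
  have hshift : ∀ k {t}, t ≤ M →
      count (· % M < c) (M * k + t) = count (· % M < c) (M * k) + min t c := fun k t ht => by
    simp only [count_add, Nat.mul_add_mod, count_mod_lt_of_le ht]
  have hmul : ∀ k, count (· % M < c) (M * k) = c * k := fun k => by
    induction k with
    | zero => simp
    | succ k ih => rw [mul_add_one, hshift k le_rfl, ih, min_eq_right hc, mul_add_one]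
  rw [hshift k ht, hmul]

lemma card_filter_Ico_sub_mod_lt {w : ℕ} (n : ℕ) (hw : 0 < w) (hM : 2 * w ≤ M) :
    #{x ∈ Ico (n - w) n | x % M < M - w} = scaledTruncDist M w n := by
  have hc : M - w ≤ M := Nat.sub_le M w
  obtain ⟨k, t, rfl, ht⟩ : ∃ k t, n = M * k + t ∧ t < M :=
    ⟨n / M, n % M, (Nat.div_add_mod n M).symm, Nat.mod_lt _ (by omega)⟩
  rw [scaledTruncDist, card_filter_Ico_eq_count_sub _ (Nat.sub_le _ w), Nat.mul_add_mod,
    Nat.mod_eq_of_lt ht, count_mod_lt hc k ht.le]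
  rcases le_or_gt w t with hwt | htw
  · rw [show M * k + t - w = M * k + (t - w) by omega, count_mod_lt hc k (by omega)]
    omega
  · rcases k with _ | k
    · rw [show M * 0 + t - w = M * 0 + 0 by omega, count_mod_lt hc 0 (Nat.zero_le M)]
      omega
    · rw [show M * (k + 1) + t - w = M * k + (M + t - w) by rw [mul_add_one]; omega,
        count_mod_lt hc k (by omega), mul_add_one]
      omega

lemma Nat.div_mod_ne_pred_iff {w m x : ℕ} (hw : 0 < w) (hm : 0 < m) :
    x / w % m ≠ m - 1 ↔ x % (w * m) < w * m - w := by
  have hlt : x % (w * m) < w * m := Nat.mod_lt x (Nat.mul_pos hw hm)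
  have hdiv : x % (w * m) / w < m := Nat.div_lt_of_lt_mul hlt
  have hiff : x % (w * m) / w < m - 1 ↔ x % (w * m) < (m - 1) * w := Nat.div_lt_iff_lt_mul hw
  rw [Nat.sub_one_mul, mul_comm m] at hiff
  rw [← Nat.mod_mul_right_div_self]
  omega

end Count

lemma card_filter_add_single_notMem_lexSegment {m r : ℕ} [NeZero m] (hm : 2 ≤ m) {n : ℕ}
    (hn : n ≤ m ^ r) (i : Fin r) :
    #{g ∈ lexSegment m r n | g + Pi.single i 1 ∉ lexSegment m r n}
      = scaledTruncDist (m ^ (r - 1 - (i : ℕ)) * m) (m ^ (r - 1 - (i : ℕ))) n := by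
  have hw : 0 < m ^ (r - 1 - (i : ℕ)) := by positivity
  rw [card_filter_add_single_notMem_lexSegment_eq_card_range,
    ← card_filter_Ico_sub_mod_lt n hw (by nlinarith)]
  congr 1
  ext x
  simp only [mem_filter, mem_range, mem_Ico, Nat.div_mod_ne_pred_iff hw (by omega : 0 < m)]
  omega

lemma nearestIntDist_natCast (n : ℕ) : nearestIntDist n = 0 := by
  simp [nearestIntDist]

lemma natCast_mul_min_nearestIntDist_div {m w : ℕ} (hm : 0 < m) (hw : 0 < w) (n : ℕ) :
    ((w * m : ℕ) : ℝ) * min (nearestIntDist (n / (w * m : ℕ))) (1 / m)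
      = scaledTruncDist (w * m) w n := by
  have hM : (0 : ℝ) < (w * m : ℕ) := by positivity
  rw [mul_min_of_nonneg _ _ hM.le, nearestIntDist, abs_sub_round_div_natCast_eq,
    mul_div_cancel₀ _ hM.ne', scaledTruncDist, Nat.cast_min, min_comm]
  push_cast
  field_simp

lemma pow_mul_omegaT_natCast_div_pow {m : ℕ} (hm : 0 < m) (n r : ℕ) :
    (m : ℝ) ^ r * omegaT m (n / (m : ℝ) ^ r)
      = ∑ k ∈ range r, (scaledTruncDist (m ^ (r - 1 - k) * m) (m ^ (r - 1 - k)) n : ℝ) := by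
  have htail : ∀ k ∉ range r,
      ((m : ℝ) ^ k)⁻¹ * min (nearestIntDist ((m : ℝ) ^ k * (n / (m : ℝ) ^ r))) (1 / m) = 0 := by
    intro k hk
    obtain ⟨j, rfl⟩ := Nat.exists_eq_add_of_le (not_lt.1 (mem_range.not.1 hk))
    have hint : (m : ℝ) ^ (r + j) * (n / (m : ℝ) ^ r) = ((n * m ^ j : ℕ) : ℝ) := by
      push_cast
      field_simp
      ring
    rw [hint, nearestIntDist_natCast, min_eq_left (by positivity), mul_zero]
  rw [omegaT, tsum_eq_sum htail, mul_sum]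
  refine sum_congr rfl fun k hk => ?_
  have hpow : (m : ℝ) ^ r = ((m ^ (r - 1 - k) * m : ℕ) : ℝ) * (m : ℝ) ^ k := by
    rw [← pow_succ, Nat.cast_pow, ← pow_add]
    congr 1
    have := mem_range.1 hk
    omega
  rw [← natCast_mul_min_nearestIntDist_div hm (by positivity), hpow]
  field_simp

theorem stmt1_general {r m : ℕ} [NeZero m] (hm : 2 ≤ m)
    {n : ℕ} (hn : n ≤ m ^ r) :
    (edgeBoundary
        (Finset.image (fun i : Fin r => Pi.single i (1 : ZMod m)) Finset.univ)
        (lexSegment m r n) : ℝ)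
      = (m : ℝ) ^ r * omegaT m ((n : ℝ) / (m : ℝ) ^ r) := by
  have : Fact (1 < m) := ⟨hm⟩
  rw [pow_mul_omegaT_natCast_div_pow (by omega), edgeBoundary_eq_sum,
    sum_image fun i _ j _ h => Pi.single_left_injective one_ne_zero h,
    ← Fin.sum_univ_eq_sum_range
      (fun k => (scaledTruncDist (m ^ (r - 1 - k) * m) (m ^ (r - 1 - k)) n : ℝ))]
  push_cast
  exact sum_congr rfl fun i _ => congrArg _ (card_filter_add_single_notMem_lexSegment hm hn i)

theorem stmt1 {r m : ℕ} [NeZero m] (hr : 1 ≤ r) (hm : 2 ≤ m)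
    {n : ℕ} (hn : n ≤ m ^ r) :
    (edgeBoundary
        (Finset.image (fun i : Fin r => Pi.single i (1 : ZMod m)) Finset.univ)
        (lexSegment m r n) : ℝ)
      = (m : ℝ) ^ r * omegaT m ((n : ℝ) / (m : ℝ) ^ r) :=
  stmt1_general hm hn
end

section
/- (Boros–Páles inequality) For all real numbers x_1 and x_2, ω_2((x_1 + x_2)/2) ≤ (ω_2(x_1) + ω_2(x_2))/2 + (1/2)·|x_1 − x_2|. -/
/-!
For `m = 2` the truncation at `1/m` in `ω_m` is vacuous, so `ω_2` is the Takagi function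
`T x = ∑ 2⁻ᵏ ‖2ᵏ x‖`, which satisfies `T x = ‖x‖ + T (2x) / 2`. Hence the midpoint defect
`D u h = T u - (T (u + h) + T (u - h)) / 2` satisfies `D u h = d u h + D (2u) (2h) / 2`, where `d`
is the midpoint defect of `‖·‖`. Since `‖·‖` is even and `1`-periodic, `d u h` depends only on
`a = ‖u‖, b = ‖h‖ ∈ [0, 1/2]`, and a case analysis there gives
`d u h + min ‖2u‖ ‖2h‖ / 2 ≤ min ‖u‖ ‖h‖`. Iterating, `D u h ≤ min ‖u‖ ‖h‖ + 2⁻ⁿ` for all `n`,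
so `D u h ≤ ‖h‖ ≤ |h|`; take `u = (x₁ + x₂) / 2` and `h = (x₁ - x₂) / 2`.
-/

lemma nearestIntDist_nonneg (x : ℝ) : 0 ≤ nearestIntDist x := abs_nonneg _

lemma nearestIntDist_le_half (x : ℝ) : nearestIntDist x ≤ 1 / 2 := abs_sub_round x

lemma nearestIntDist_le_abs_sub (x : ℝ) (z : ℤ) : nearestIntDist x ≤ |x - z| := round_le x z

lemma min_abs_one_sub_abs_le_nearestIntDist (x : ℝ) :
    min |x| (1 - |x|) ≤ nearestIntDist x := by
  unfold nearestIntDist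
  rcases eq_or_ne (round x) 0 with h | h
  · simp [h]
  · have h1 : (1 : ℝ) ≤ |(round x : ℝ)| := by exact_mod_cast Int.one_le_abs h
    have h2 := abs_sub_abs_le_abs_sub (round x : ℝ) x
    rw [abs_sub_comm] at h2
    exact min_le_of_right_le (by linarith)

lemma nearestIntDist_eq_of_sub_eq_intCast {x y : ℝ} (n : ℤ) (h : x - y = n) :
    nearestIntDist x = nearestIntDist y := by
  rw [sub_eq_iff_eq_add'] at h
  simp only [nearestIntDist, h, round_add_intCast, Int.cast_add]
  ring_nf

lemma nearestIntDist_neg (x : ℝ) : nearestIntDist (-x) = nearestIntDist x := by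
  have neg_le (y : ℝ) : nearestIntDist (-y) ≤ nearestIntDist y := by
    convert nearestIntDist_le_abs_sub (-y) (-round y) using 1
    rw [nearestIntDist, ← abs_neg]
    push_cast
    ring_nf
  exact le_antisymm (neg_le x) (by simpa using neg_le (-x))

lemma nearestIntDist_eq_of_add_eq_intCast {x y : ℝ} (n : ℤ) (h : x + y = n) :
    nearestIntDist x = nearestIntDist y := by
  rw [nearestIntDist_eq_of_sub_eq_intCast (y := -y) n (by simpa using h), nearestIntDist_neg]

lemma exists_intCast_eq_add_or_sub (x : ℝ) :
    ∃ n : ℤ, x - nearestIntDist x = n ∨ x + nearestIntDist x = n := by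
  refine ⟨round x, ?_⟩
  rcases abs_choice (x - round x) with h | h <;> simp only [nearestIntDist, h]
  · left; ring
  · right; ring

lemma nearestIntDist_add_add_nearestIntDist_sub (u h : ℝ) :
    nearestIntDist (u + h) + nearestIntDist (u - h) =
      nearestIntDist (nearestIntDist u + nearestIntDist h) +
        nearestIntDist (nearestIntDist u - nearestIntDist h) := by
  set a := nearestIntDist u
  set b := nearestIntDist h
  obtain ⟨m, hu | hu⟩ := exists_intCast_eq_add_or_sub u <;>
  obtain ⟨n, hh | hh⟩ := exists_intCast_eq_add_or_sub h
  · rw [nearestIntDist_eq_of_sub_eq_intCast (x := u + h) (y := a + b) (m + n),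
      nearestIntDist_eq_of_sub_eq_intCast (x := u - h) (y := a - b) (m - n)] <;>
    push_cast <;> linarith
  · rw [nearestIntDist_eq_of_sub_eq_intCast (x := u + h) (y := a - b) (m + n),
      nearestIntDist_eq_of_sub_eq_intCast (x := u - h) (y := a + b) (m - n),
      add_comm] <;>
    push_cast <;> linarith
  · rw [nearestIntDist_eq_of_add_eq_intCast (x := u + h) (y := a - b) (m + n),
      nearestIntDist_eq_of_add_eq_intCast (x := u - h) (y := a + b) (m - n),
      add_comm] <;>
    push_cast <;> linarith
  · rw [nearestIntDist_eq_of_add_eq_intCast (x := u + h) (y := a + b) (m + n),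
      nearestIntDist_eq_of_add_eq_intCast (x := u - h) (y := a - b) (m - n)] <;>
    push_cast <;> linarith

lemma nearestIntDist_two_mul (x : ℝ) :
    nearestIntDist (2 * x) = nearestIntDist (2 * nearestIntDist x) := by
  obtain ⟨n, hx | hx⟩ := exists_intCast_eq_add_or_sub x
  · exact nearestIntDist_eq_of_sub_eq_intCast (2 * n) (by push_cast; linarith)
  · exact nearestIntDist_eq_of_add_eq_intCast (2 * n) (by push_cast; linarith)

lemma nearestIntDist_of_abs_le_half {x : ℝ} (hx : |x| ≤ 1 / 2) : nearestIntDist x = |x| := by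
  refine le_antisymm (by simpa using nearestIntDist_le_abs_sub x 0) ?_
  have := min_abs_one_sub_abs_le_nearestIntDist x
  rwa [min_eq_left (by linarith)] at this

lemma nearestIntDist_nearestIntDist (x : ℝ) :
    nearestIntDist (nearestIntDist x) = nearestIntDist x := by
  have h := abs_of_nonneg (nearestIntDist_nonneg x)
  rw [nearestIntDist_of_abs_le_half (h.symm ▸ nearestIntDist_le_half x), h]

noncomputable def midpointDefect (g : ℝ → ℝ) (u h : ℝ) : ℝ :=
  g u - (g (u + h) + g (u - h)) / 2

lemma midpointDefect_nearestIntDist_add_le_of_mem_Icc {a b : ℝ}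
    (ha : a ∈ Set.Icc (0 : ℝ) (1 / 2)) (hb : b ∈ Set.Icc (0 : ℝ) (1 / 2)) :
    midpointDefect nearestIntDist a b
      + min (nearestIntDist (2 * a)) (nearestIntDist (2 * b)) / 2 ≤ min a b := by
  obtain ⟨ha0, ha1⟩ := ha
  obtain ⟨hb0, hb1⟩ := hb
  have hsum := min_abs_one_sub_abs_le_nearestIntDist (a + b)
  rw [abs_of_nonneg (by linarith : 0 ≤ a + b)] at hsum
  have h2a : min (nearestIntDist (2 * a)) (nearestIntDist (2 * b)) ≤ 1 - 2 * a := by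
    refine (min_le_left _ _).trans ((nearestIntDist_le_abs_sub _ 1).trans_eq ?_)
    rw [Int.cast_one, abs_of_nonpos (by linarith)]
    ring
  have h2b : min (nearestIntDist (2 * a)) (nearestIntDist (2 * b)) ≤ 2 * b := by
    refine (min_le_right _ _).trans ((nearestIntDist_le_abs_sub _ 0).trans_eq ?_)
    rw [Int.cast_zero, sub_zero, abs_of_nonneg (by linarith)]
  rw [midpointDefect, nearestIntDist_of_abs_le_half (x := a) (by rwa [abs_of_nonneg ha0]),
    abs_of_nonneg ha0,
    nearestIntDist_of_abs_le_half (x := a - b) (by cases abs_cases (a - b) <;> linarith)]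
  rcases le_total a b with hab | hab
  · rw [abs_of_nonpos (sub_nonpos.2 hab), min_eq_left hab]
    rcases min_cases (a + b) (1 - (a + b)) with ⟨_, _⟩ | ⟨_, _⟩ <;> linarith
  · rw [abs_of_nonneg (sub_nonneg.2 hab), min_eq_right hab]
    rcases min_cases (a + b) (1 - (a + b)) with ⟨_, _⟩ | ⟨_, _⟩ <;> linarith

lemma midpointDefect_nearestIntDist_add_le (u h : ℝ) :
    midpointDefect nearestIntDist u h
      + min (nearestIntDist (2 * u)) (nearestIntDist (2 * h)) / 2
      ≤ min (nearestIntDist u) (nearestIntDist h) := by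
  have := midpointDefect_nearestIntDist_add_le_of_mem_Icc
    ⟨nearestIntDist_nonneg u, nearestIntDist_le_half u⟩
    ⟨nearestIntDist_nonneg h, nearestIntDist_le_half h⟩
  rwa [midpointDefect, nearestIntDist_nearestIntDist, ← nearestIntDist_add_add_nearestIntDist_sub,
    ← nearestIntDist_two_mul, ← nearestIntDist_two_mul] at this

noncomputable def takagi (x : ℝ) : ℝ := ∑' k : ℕ, (2 ^ k)⁻¹ * nearestIntDist (2 ^ k * x)

lemma takagi_term_le (x : ℝ) (k : ℕ) :
    (2 ^ k)⁻¹ * nearestIntDist (2 ^ k * x) ≤ 1 / 2 / 2 ^ k := by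
  rw [div_eq_inv_mul]
  exact mul_le_mul_of_nonneg_left (nearestIntDist_le_half _) (by positivity)

lemma summable_takagi (x : ℝ) :
    Summable fun k : ℕ ↦ (2 ^ k)⁻¹ * nearestIntDist (2 ^ k * x) :=
  (summable_geometric_two' 1).of_nonneg_of_le
    (fun k ↦ mul_nonneg (by positivity) (nearestIntDist_nonneg _)) (takagi_term_le x)

lemma takagi_nonneg (x : ℝ) : 0 ≤ takagi x :=
  tsum_nonneg fun k ↦ mul_nonneg (by positivity) (nearestIntDist_nonneg _)

lemma takagi_le_one (x : ℝ) : takagi x ≤ 1 :=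
  ((summable_takagi x).tsum_le_tsum (takagi_term_le x) (summable_geometric_two' 1)).trans_eq
    (tsum_geometric_two' 1)

lemma takagi_eq_add_takagi_two_mul (x : ℝ) :
    takagi x = nearestIntDist x + takagi (2 * x) / 2 := by
  rw [takagi, (summable_takagi x).tsum_eq_zero_add, takagi, ← tsum_div_const]
  congr 1
  · simp
  · refine tsum_congr fun k ↦ ?_
    rw [show (2 : ℝ) ^ (k + 1) * x = 2 ^ k * (2 * x) by ring, pow_succ, mul_inv]
    ring

lemma omegaT_two_eq_takagi (x : ℝ) : omegaT 2 x = takagi x := by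
  refine tsum_congr fun k ↦ ?_
  rw [Nat.cast_ofNat, min_eq_left (nearestIntDist_le_half _)]

lemma midpointDefect_takagi (u h : ℝ) :
    midpointDefect takagi u h =
      midpointDefect nearestIntDist u h + midpointDefect takagi (2 * u) (2 * h) / 2 := by
  simp only [midpointDefect]
  rw [takagi_eq_add_takagi_two_mul u, takagi_eq_add_takagi_two_mul (u + h),
    takagi_eq_add_takagi_two_mul (u - h), mul_add, mul_sub]
  ring

lemma midpointDefect_takagi_le_one (u h : ℝ) : midpointDefect takagi u h ≤ 1 := by
  have := takagi_le_one u
  have := takagi_nonneg (u + h)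
  have := takagi_nonneg (u - h)
  rw [midpointDefect]
  linarith

lemma midpointDefect_takagi_le_min_add_pow (n : ℕ) (u h : ℝ) :
    midpointDefect takagi u h ≤ min (nearestIntDist u) (nearestIntDist h) + (1 / 2) ^ n := by
  induction n generalizing u h with
  | zero =>
    have := le_min (nearestIntDist_nonneg u) (nearestIntDist_nonneg h)
    have := midpointDefect_takagi_le_one u h
    rw [pow_zero]
    linarith
  | succ n ih =>
    have := ih (2 * u) (2 * h)
    have := midpointDefect_nearestIntDist_add_le u h
    rw [midpointDefect_takagi, pow_succ]
    linarith

lemma midpointDefect_takagi_le_min (u h : ℝ) :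
    midpointDefect takagi u h ≤ min (nearestIntDist u) (nearestIntDist h) := by
  refine le_of_forall_pos_lt_add fun ε hε ↦ ?_
  obtain ⟨n, hn⟩ := exists_pow_lt_of_lt_one hε (by norm_num : (1 / 2 : ℝ) < 1)
  linarith [midpointDefect_takagi_le_min_add_pow n u h]

/-- The Boros–Páles inequality for the Takagi function. -/
theorem stmt3 (x₁ x₂ : ℝ) :
    omegaT 2 ((x₁ + x₂) / 2)
      ≤ (omegaT 2 x₁ + omegaT 2 x₂) / 2 + (1 / 2) * |x₁ - x₂| := by
  simp only [omegaT_two_eq_takagi]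
  have hdefect := (midpointDefect_takagi_le_min ((x₁ + x₂) / 2) ((x₁ - x₂) / 2)).trans
    (min_le_right _ _)
  have hdist : nearestIntDist ((x₁ - x₂) / 2) ≤ |x₁ - x₂| / 2 := by
    simpa [abs_div] using nearestIntDist_le_abs_sub ((x₁ - x₂) / 2) 0
  rw [midpointDefect, show (x₁ + x₂) / 2 + (x₁ - x₂) / 2 = x₁ by ring,
    show (x₁ + x₂) / 2 - (x₁ - x₂) / 2 = x₂ by ring] at hdefect
  linarith
end
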